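/- arXiv:2211.03993 — 4 statements merged into one kernel-verified Lean document; each statement's English description precedes it below -/
import Mathlib

section
/- Let f : ℝ → ℂ be infinitely differentiable, let p ∈ ℕ and N ∈ ℕ. Then there exists a function H holomorphic on the half-plane {z ∈ ℂ : Re z > p - N} such that for every z with Re z > p one has ∫_0^1 r^{z-p-1} f(r) dr = Σ_{k=0}^{N-1} f^{(k)}(0) / (k! (z - p + k)) + H(z), where f^{(k)} denotes the k-th derivative of f. -/
open MeasureTheory Set

open Filter Asymptotics Complex Topology

lemma mellin_indicator_Ioc (h : ℝ → ℂ) (s : ℂ) :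
    mellin (Set.indicator (Ioc 0 1) h) s = ∫ t in Ioc (0:ℝ) 1, (t : ℂ) ^ (s - 1) * h t := by
  simp_rw [mellin, ← Set.indicator_smul, MeasureTheory.integral_indicator measurableSet_Ioc,
    Measure.restrict_restrict_of_subset Ioc_subset_Ioi_self, smul_eq_mul]

lemma mellinConvergent_indicator_Ioc (h : ℝ → ℂ) (s : ℂ) :
    MellinConvergent (Set.indicator (Ioc 0 1) h) s ↔
      IntegrableOn (fun t : ℝ => (t : ℂ) ^ (s - 1) * h t) (Ioc 0 1) := by
  rw [MellinConvergent, IntegrableOn]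
  simp_rw [← Set.indicator_smul]
  rw [integrable_indicator_iff measurableSet_Ioc, IntegrableOn,
    Measure.restrict_restrict_of_subset Ioc_subset_Ioi_self]
  simp_rw [smul_eq_mul]
  rfl

/-- For `f : ℝ → ℂ` smooth, `p N : ℕ`, there is a function `H` holomorphic on
`{z | Re z > p - N}` such that for `Re z > p` one has
`∫_0^1 r^(z-p-1) f(r) dr = Σ_{k=0}^{N-1} f^(k)(0)/(k! (z-p+k)) + H z`. -/
theorem gil_loya_radial_meromorphic_continuation
    (f : ℝ → ℂ) (hf : ContDiff ℝ (⊤ : ℕ∞) f) (p N : ℕ) :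
    ∃ H : ℂ → ℂ, DifferentiableOn ℂ H {z : ℂ | (p : ℝ) - N < z.re} ∧
      ∀ z : ℂ, (p : ℝ) < z.re →
        ∫ r in Set.Ioc (0 : ℝ) 1, (r : ℂ) ^ (z - (p : ℂ) - 1) * f r =
          (∑ k ∈ Finset.range N,
            iteratedDeriv k f 0 / ((Nat.factorial k : ℂ) * (z - (p : ℂ) + (k : ℂ)))) + H z := by
  classical
  set P : ℝ → ℂ := fun t =>
    ∑ k ∈ Finset.range N, iteratedDeriv k f 0 / (Nat.factorial k : ℂ) * (t : ℂ) ^ k with hPdef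
  set g : ℝ → ℂ := Set.indicator (Ioc 0 1) (fun t => f t - P t) with hgdef
  have hcontP : Continuous P := by
    apply continuous_finset_sum
    intro k _
    exact continuous_const.mul ((Complex.continuous_ofReal.pow k))
  have hcont : Continuous fun t : ℝ => f t - P t := hf.continuous.sub hcontP
  have hint : IntegrableOn (fun t => f t - P t) (Ioc (0:ℝ) 1) := hcont.integrableOn_Ioc
  have hgi : Integrable g := hint.integrable_indicator measurableSet_Ioc
  have hfc : LocallyIntegrableOn g (Ioi (0:ℝ)) :=
    hgi.locallyIntegrable.locallyIntegrableOn _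
  -- bound at infinity (g vanishes there)
  have htop : ∀ a : ℝ, g =O[atTop] fun t : ℝ => t ^ (-a) := by
    intro a
    have hev : g =ᶠ[atTop] (fun _ => (0 : ℂ)) := by
      filter_upwards [eventually_gt_atTop (1:ℝ)] with t ht
      exact Set.indicator_of_notMem (fun hmem => absurd hmem.2 (not_le.2 ht)) _
    exact hev.trans_isBigO (isBigO_zero _ _)
  -- iterated derivatives within Icc agree with global ones
  have key : ∀ k, iteratedDerivWithin k f (Icc (0:ℝ) 1) 0 = iteratedDeriv k f 0 := by
    intro k
    rw [iteratedDerivWithin_eq_iteratedFDerivWithin, iteratedDeriv_eq_iteratedFDeriv]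
    congr 1
    exact ((((contDiff_iff_ftaylorSeries (n := (⊤ : ℕ∞))).mp (hf.of_le (by simp))).hasFTaylorSeriesUpToOn
      (Icc 0 1)).eq_iteratedFDerivWithin_of_uniqueDiffOn (by exact_mod_cast le_top)
      (uniqueDiffOn_Icc zero_lt_one) (Set.left_mem_Icc.2 zero_le_one)).symm
  -- Taylor remainder bound near 0
  have hbot : g =O[𝓝[>] (0:ℝ)] fun t : ℝ => t ^ (N:ℝ) := by
    have hev : ∀ᶠ t in 𝓝[>] (0:ℝ), f t - P t = g t := by
      filter_upwards [Ioc_mem_nhdsGT_of_mem (Set.mem_Ico.2 ⟨le_refl (0:ℝ), zero_lt_one⟩)] with t ht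
      exact (Set.indicator_of_mem ht (fun t => f t - P t)).symm
    have hO : (fun t => f t - P t) =O[𝓝[>] (0:ℝ)] fun t : ℝ => t ^ (N:ℝ) := by
      cases N with
      | zero =>
        have h1 : Tendsto (fun t => f t - P t) (𝓝[>] (0:ℝ)) (𝓝 (f 0 - P 0)) :=
          (hcont.tendsto 0).mono_left nhdsWithin_le_nhds
        refine (h1.isBigO_one ℝ).congr' EventuallyEq.rfl ?_
        filter_upwards with t
        simp
      | succ n =>
        obtain ⟨C, hC⟩ := exists_taylor_mean_remainder_bound (zero_le_one (α := ℝ))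
          ((hf.of_le (by exact_mod_cast le_top)).contDiffOn : ContDiffOn ℝ (n+1) f (Icc 0 1))
        have hPt : ∀ x : ℝ, taylorWithinEval f n (Icc 0 1) 0 x = P x := by
          intro x
          rw [taylor_within_apply]
          refine Finset.sum_congr rfl fun k _ => ?_
          rw [key k, sub_zero, Complex.real_smul]
          push_cast
          rw [div_eq_mul_inv]
          ring
        rw [isBigO_iff]
        refine ⟨C, ?_⟩
        filter_upwards [Ioc_mem_nhdsGT_of_mem (Set.mem_Ico.2 ⟨le_refl (0:ℝ), zero_lt_one⟩)]
          with x hx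
        have h2 := hC x (Ioc_subset_Icc_self hx)
        rw [hPt x, sub_zero] at h2
        have h3 : ‖x ^ ((n+1 : ℕ) : ℝ)‖ = x ^ (n+1) := by
          rw [Real.norm_eq_abs, Real.rpow_natCast, _root_.abs_of_nonneg (pow_nonneg hx.1.le _)]
        rw [h3]
        exact h2
    exact hO.congr' hev EventuallyEq.rfl
  have hbot' : g =O[𝓝[>] (0:ℝ)] fun t : ℝ => t ^ (-(-(N:ℝ))) := by
    rw [neg_neg]; exact hbot
  refine ⟨fun z => mellin g (z - (p:ℂ)), ?_, ?_⟩
  · intro z hz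
    have hz' : -(N:ℝ) < (z - (p:ℂ)).re := by
      simp only [Complex.sub_re, Complex.natCast_re]
      simp only [Set.mem_setOf_eq] at hz
      linarith
    have h1 : DifferentiableAt ℂ (mellin g) (z - (p:ℂ)) :=
      mellin_differentiableAt_of_isBigO_rpow hfc (htop ((z - (p:ℂ)).re + 1))
        (by linarith) hbot' hz'
    exact (h1.comp z ((differentiable_id.sub_const _) z)).differentiableWithinAt
  · intro z hz
    set s : ℂ := z - (p:ℂ) with hs
    have hs0 : 0 < s.re := by
      simp only [hs, Complex.sub_re, Complex.natCast_re]
      linarith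
    -- Mellin of each power
    have hMk : ∀ k : ℕ, HasMellin (Set.indicator (Ioc 0 1) (fun t : ℝ => (t:ℂ) ^ (k:ℂ))) s
        (1 / (s + k)) := by
      intro k
      refine hasMellin_cpow_Ioc _ ?_
      rw [Complex.natCast_re]
      positivity
    have hIk : ∀ k : ℕ, IntegrableOn (fun t : ℝ => (t:ℂ) ^ (s-1) * (t:ℂ) ^ k) (Ioc 0 1) := by
      intro k
      have := (mellinConvergent_indicator_Ioc (fun t : ℝ => (t:ℂ) ^ (k:ℂ)) s).mp (hMk k).1
      simpa only [Complex.cpow_natCast] using this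
    have hVk : ∀ k : ℕ, ∫ t in Ioc (0:ℝ) 1, (t:ℂ) ^ (s-1) * (t:ℂ) ^ k = 1 / (s + k) := by
      intro k
      have := (hMk k).2
      rw [mellin_indicator_Ioc] at this
      simpa only [Complex.cpow_natCast] using this
    -- remainder integrability
    have hmc : MellinConvergent g s :=
      mellinConvergent_of_isBigO_rpow hfc (htop (s.re + 1)) (by linarith) hbot'
        (by linarith [Nat.cast_nonneg (α := ℝ) N])
    have hIr : IntegrableOn (fun t : ℝ => (t:ℂ) ^ (s-1) * (f t - P t)) (Ioc 0 1) :=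
      (mellinConvergent_indicator_Ioc _ _).mp hmc
    have hVr : mellin g s = ∫ t in Ioc (0:ℝ) 1, (t:ℂ) ^ (s-1) * (f t - P t) :=
      mellin_indicator_Ioc _ _
    -- split the integral
    have hIsum : IntegrableOn (fun t : ℝ =>
        ∑ k ∈ Finset.range N, iteratedDeriv k f 0 / (Nat.factorial k : ℂ) *
          ((t:ℂ) ^ (s-1) * (t:ℂ) ^ k)) (Ioc 0 1) :=
      integrable_finset_sum _ fun k _ => (hIk k).const_mul _
    have hsplit : EqOn (fun t : ℝ => (t:ℂ) ^ (z - (p:ℂ) - 1) * f t)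
        (fun t : ℝ => (∑ k ∈ Finset.range N, iteratedDeriv k f 0 / (Nat.factorial k : ℂ) *
          ((t:ℂ) ^ (s-1) * (t:ℂ) ^ k)) + (t:ℂ) ^ (s-1) * (f t - P t)) (Ioc 0 1) := by
      intro t _
      have h1 : (t:ℂ) ^ (s-1) * P t = ∑ k ∈ Finset.range N,
          iteratedDeriv k f 0 / (Nat.factorial k : ℂ) * ((t:ℂ) ^ (s-1) * (t:ℂ) ^ k) := by
        simp only [hPdef, Finset.mul_sum]
        exact Finset.sum_congr rfl fun k _ => by ring
      show (t:ℂ) ^ (s-1) * f t = (∑ k ∈ Finset.range N,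
          iteratedDeriv k f 0 / (Nat.factorial k : ℂ) * ((t:ℂ) ^ (s-1) * (t:ℂ) ^ k)) +
          (t:ℂ) ^ (s-1) * (f t - P t)
      rw [← h1]
      ring
    rw [setIntegral_congr_fun measurableSet_Ioc hsplit, integral_add hIsum hIr,
      integral_finset_sum _ fun k _ => (hIk k).const_mul _, ← hVr]
    congr 1
    refine Finset.sum_congr rfl fun k hk => ?_
    rw [MeasureTheory.integral_const_mul, hVk k, div_mul_div_comm, mul_one]
end

section
/- Let f : ℝ → ℂ be infinitely differentiable and let p ∈ ℕ. Then there exists a function G : ℂ → ℂ, holomorphic on ℂ \ {p - k : k ∈ ℕ}, such that G(z) = ∫_0^1 r^{z-p-1} f(r) dr for every z with Re z > p, and for every k ∈ ℕ the limit of (z - (p - k)) · G(z) as z → p - k (z ≠ p - k) equals f^{(k)}(0)/k!. In particular G has at most simple poles, all located in the set {p, p-1, p-2, ...}, and its residue at z = 0 equals f^{(p)}(0)/p!. -/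
open MeasureTheory Set

namespace GilLoyaAux

open Filter Asymptotics Complex

noncomputable def c (f : ℝ → ℂ) (k : ℕ) : ℂ := iteratedDeriv k f 0 / (k.factorial : ℂ)

noncomputable def g (f : ℝ → ℂ) (N : ℕ) (r : ℝ) : ℂ :=
  f r - ∑ k ∈ Finset.range N, c f k * (r : ℂ) ^ k

noncomputable def phi (f : ℝ → ℂ) (N : ℕ) : ℝ → ℂ := Set.indicator (Set.Ioc 0 1) (g f N)

noncomputable def F (f : ℝ → ℂ) (p : ℕ) (N : ℕ) (z : ℂ) : ℂ :=
  (∑ k ∈ Finset.range N, c f k / (z - p + k)) + mellin (phi f N) (z - p)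

lemma g_continuous (f : ℝ → ℂ) (hf : Continuous f) (N : ℕ) : Continuous (g f N) := by
  unfold g
  fun_prop

end GilLoyaAux

namespace GilLoyaAux2

open Filter Asymptotics Complex
open GilLoyaAux

lemma iteratedDerivWithin_Icc' (f : ℝ → ℂ) (hf : ContDiff ℝ (⊤ : ℕ∞) f) (k : ℕ) {x : ℝ}
    (hx : x ∈ Set.Icc (0:ℝ) 1) :
    iteratedDerivWithin k f (Set.Icc (0:ℝ) 1) x = iteratedDeriv k f x := by
  have h := contDiff_iff_ftaylorSeries.mp (hf.of_le le_rfl)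
  have h1 := h.eq_iteratedFDeriv (m := k) (by exact_mod_cast le_top) x
  have h2 := (h.hasFTaylorSeriesUpToOn (Set.Icc (0:ℝ) 1)).eq_iteratedFDerivWithin_of_uniqueDiffOn
    (m := k) (by exact_mod_cast le_top) (uniqueDiffOn_Icc one_pos) hx
  rw [iteratedDerivWithin_eq_iteratedFDerivWithin, iteratedDeriv_eq_iteratedFDeriv, ← h1, ← h2]

lemma taylor_eval (f : ℝ → ℂ) (hf : ContDiff ℝ (⊤ : ℕ∞) f) (n : ℕ) (r : ℝ) :
    taylorWithinEval f n (Set.Icc (0:ℝ) 1) 0 r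
      = ∑ k ∈ Finset.range (n + 1), c f k * (r : ℂ) ^ k := by
  rw [taylor_within_apply]
  refine Finset.sum_congr rfl fun k _ => ?_
  rw [iteratedDerivWithin_Icc' f hf k (by simp)]
  rw [Complex.real_smul, c]
  push_cast
  ring

lemma g_bound (f : ℝ → ℂ) (hf : ContDiff ℝ (⊤ : ℕ∞) f) (N : ℕ) :
    ∃ C : ℝ, ∀ r ∈ Set.Icc (0:ℝ) 1, ‖g f N r‖ ≤ C * r ^ N := by
  cases N with
  | zero =>
    obtain ⟨C, hC⟩ := isCompact_Icc.exists_bound_of_continuousOn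
      (f := f) (s := Set.Icc (0:ℝ) 1) hf.continuous.continuousOn
    exact ⟨C, fun r hr => by simpa [g] using hC r hr⟩
  | succ n =>
    obtain ⟨C, hC⟩ := isCompact_Icc.exists_bound_of_continuousOn
      (f := iteratedDeriv (n+1) f) (s := Set.Icc (0:ℝ) 1)
      ((hf.continuous_iteratedDeriv (n+1) (by exact_mod_cast le_top)).continuousOn)
    refine ⟨C / n.factorial, fun r hr => ?_⟩
    have hb := taylor_mean_remainder_bound (f := f) (a := 0) (b := 1) (x := r) (n := n)
      zero_le_one (hf.of_le (by exact_mod_cast le_top)).contDiffOn hr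
      (fun y hy => by rw [iteratedDerivWithin_Icc' f hf _ hy]; exact hC y hy)
    rw [taylor_eval f hf n r] at hb
    calc ‖g f (n+1) r‖ ≤ C * (r - 0) ^ (n + 1) / n.factorial := hb
    _ = C / n.factorial * r ^ (n+1) := by ring

end GilLoyaAux2

namespace GilLoyaAux3

open Filter Asymptotics Complex
open GilLoyaAux GilLoyaAux2

lemma phi_locInt (f : ℝ → ℂ) (hf : ContDiff ℝ (⊤ : ℕ∞) f) (N : ℕ) :
    LocallyIntegrableOn (phi f N) (Set.Ioi (0:ℝ)) := by
  have : Integrable (phi f N) := by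
    refine (IntegrableOn.integrable_indicator ?_ measurableSet_Ioc)
    exact ((g_continuous f hf.continuous N).continuousOn).integrableOn_compact isCompact_Icc
      |>.mono_set Set.Ioc_subset_Icc_self
  exact this.locallyIntegrable.locallyIntegrableOn _

lemma phi_top (f : ℝ → ℂ) (N : ℕ) (a : ℝ) : (phi f N) =O[atTop] (· ^ (-a)) := by
  have h : (phi f N) =ᶠ[atTop] (fun _ => (0:ℂ)) := by
    filter_upwards [eventually_gt_atTop 1] with x hx
    simp [phi, Set.indicator_apply, hx.not_ge, Set.mem_Ioc]
  exact h.trans_isBigO (isBigO_zero _ _)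

lemma phi_bot (f : ℝ → ℂ) (hf : ContDiff ℝ (⊤ : ℕ∞) f) (N : ℕ) :
    (phi f N) =O[nhdsWithin 0 (Set.Ioi 0)] (· ^ (-(-(N:ℝ)))) := by
  obtain ⟨C, hC⟩ := g_bound f hf N
  rw [isBigO_iff]
  refine ⟨C, ?_⟩
  filter_upwards [Ioc_mem_nhdsGT_of_mem (by simp : (0:ℝ) ∈ Set.Ico (0:ℝ) 1)] with x hx
  have hx0 : 0 < x := hx.1
  rw [neg_neg]
  have : phi f N x = g f N x := Set.indicator_of_mem hx _
  rw [this, Real.norm_eq_abs, Real.abs_rpow_of_nonneg hx0.le, abs_of_pos hx0,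
    Real.rpow_natCast]
  exact hC x ⟨hx0.le, hx.2⟩

lemma mellin_phi_diff (f : ℝ → ℂ) (hf : ContDiff ℝ (⊤ : ℕ∞) f) (N : ℕ) {s : ℂ}
    (hs : -(N:ℝ) < s.re) : DifferentiableAt ℂ (mellin (phi f N)) s :=
  mellin_differentiableAt_of_isBigO_rpow (phi_locInt f hf N) (phi_top f N (s.re + 1))
    (by linarith) (phi_bot f hf N) hs

lemma mellin_phi_eq (f : ℝ → ℂ) (N : ℕ) (s : ℂ) :
    mellin (phi f N) s = ∫ r in Set.Ioc (0:ℝ) 1, (r : ℂ) ^ (s - 1) * g f N r := by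
  rw [mellin]
  have h : ∀ t : ℝ, (t : ℂ) ^ (s - 1) • phi f N t
      = Set.indicator (Set.Ioc (0:ℝ) 1) (fun r : ℝ => (r : ℂ) ^ (s - 1) * g f N r) t := by
    intro t
    by_cases ht : t ∈ Set.Ioc (0:ℝ) 1 <;>
      simp [phi, Set.indicator_of_mem, Set.indicator_of_notMem, ht, smul_eq_mul]
  simp_rw [h]
  rw [setIntegral_indicator measurableSet_Ioc]
  congr 1
  rw [Set.inter_eq_right.mpr (fun x hx => hx.1)]

end GilLoyaAux3

namespace GilLoyaAux4

open Filter Asymptotics Complex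
open GilLoyaAux GilLoyaAux2 GilLoyaAux3

lemma cpow_continuousOn (s : ℂ) :
    ContinuousOn (fun t : ℝ => (t : ℂ) ^ (s - 1)) (Set.Ioc (0:ℝ) 1) := by
  intro t ht
  exact (Complex.continuousAt_ofReal_cpow_const t (s - 1) (Or.inr ht.1.ne')).continuousWithinAt

lemma intg (f : ℝ → ℂ) (hf : ContDiff ℝ (⊤ : ℕ∞) f) (N : ℕ) {s : ℂ} (hs : -(N:ℝ) < s.re) :
    IntegrableOn (fun t : ℝ => (t : ℂ) ^ (s - 1) * g f N t) (Set.Ioc (0:ℝ) 1) := by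
  obtain ⟨C, hC⟩ := g_bound f hf N
  have hmeas : AEStronglyMeasurable (fun t : ℝ => (t : ℂ) ^ (s - 1) * g f N t)
      (volume.restrict (Set.Ioc (0:ℝ) 1)) :=
    ((cpow_continuousOn s).mul (g_continuous f hf.continuous N).continuousOn).aestronglyMeasurable
      measurableSet_Ioc
  have hint : IntegrableOn (fun t : ℝ => C * t ^ (s.re - 1 + N)) (Set.Ioc (0:ℝ) 1) := by
    refine Integrable.const_mul ?_ C
    exact (intervalIntegrable_iff_integrableOn_Ioc_of_le zero_le_one).mp
      (intervalIntegral.intervalIntegrable_rpow' (by linarith))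
  refine Integrable.mono' hint hmeas ?_
  filter_upwards [ae_restrict_mem measurableSet_Ioc] with t ht
  have ht0 : 0 < t := ht.1
  rw [norm_mul, Complex.norm_cpow_eq_rpow_re_of_pos ht0]
  calc t ^ (s - 1).re * ‖g f N t‖ ≤ t ^ (s.re - 1) * (C * t ^ N) := by
        rw [Complex.sub_re, Complex.one_re]
        exact mul_le_mul_of_nonneg_left (hC t ⟨ht0.le, ht.2⟩) (Real.rpow_nonneg ht0.le _)
    _ = C * t ^ (s.re - 1 + N) := by
        rw [Real.rpow_add ht0, Real.rpow_natCast]; ring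

lemma int_cpow_Ioc {w : ℂ} (hw : 0 < w.re) :
    (∫ t in Set.Ioc (0:ℝ) 1, (t : ℂ) ^ (w - 1)) = 1 / w := by
  have hw0 : w ≠ 0 := fun h => by simp [h] at hw
  rw [← intervalIntegral.integral_of_le zero_le_one,
    integral_cpow (Or.inl (by simp [Complex.sub_re]; linarith))]
  simp [sub_add_cancel, Complex.one_cpow, Complex.zero_cpow hw0]

end GilLoyaAux4

namespace GilLoyaAux5

open Filter Asymptotics Complex
open GilLoyaAux GilLoyaAux2 GilLoyaAux3 GilLoyaAux4

lemma F_succ (f : ℝ → ℂ) (hf : ContDiff ℝ (⊤ : ℕ∞) f) (p N : ℕ) {z : ℂ}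
    (hz : -(N:ℝ) < (z - (p:ℂ)).re) : F f p (N+1) z = F f p N z := by
  set s := z - (p:ℂ) with hsdef
  have hsre : 0 < (s + N).re := by
    simp only [Complex.add_re, Complex.natCast_re]; linarith
  have hz' : -((N:ℝ)+1) < s.re := by linarith
  have hint1 := intg f hf N hz
  have hint2 := intg f hf (N+1) (by exact_mod_cast hz')
  have hdiff : (∫ t in Set.Ioc (0:ℝ) 1, (t : ℂ) ^ (s - 1) * g f N t)
      - (∫ t in Set.Ioc (0:ℝ) 1, (t : ℂ) ^ (s - 1) * g f (N+1) t)
      = c f N * (1 / (s + N)) := by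
    rw [← integral_sub hint1 hint2]
    have hcongr : ∀ t ∈ Set.Ioc (0:ℝ) 1,
        (t : ℂ) ^ (s - 1) * g f N t - (t : ℂ) ^ (s - 1) * g f (N+1) t
          = c f N * (t : ℂ) ^ (s + N - 1) := by
      intro t ht
      have ht0 : (t : ℂ) ≠ 0 := Complex.ofReal_ne_zero.mpr ht.1.ne'
      have hgg : g f N t - g f (N+1) t = c f N * (t : ℂ) ^ N := by
        simp only [g, Finset.sum_range_succ]; ring
      have hpow : (t : ℂ) ^ (s - 1) * (t : ℂ) ^ (N : ℕ)
          = (t : ℂ) ^ (s + N - 1) := by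
        rw [← Complex.cpow_natCast, ← Complex.cpow_add _ _ ht0]
        ring_nf
      calc (t : ℂ) ^ (s - 1) * g f N t - (t : ℂ) ^ (s - 1) * g f (N+1) t
          = (t : ℂ) ^ (s - 1) * (g f N t - g f (N+1) t) := by ring
        _ = c f N * ((t : ℂ) ^ (s - 1) * (t : ℂ) ^ (N : ℕ)) := by rw [hgg]; ring
        _ = c f N * (t : ℂ) ^ (s + N - 1) := by rw [hpow]
    rw [setIntegral_congr_fun measurableSet_Ioc hcongr, integral_const_mul]
    congr 1
    exact int_cpow_Ioc hsre
  have key : mellin (phi f (N+1)) s = mellin (phi f N) s - c f N * (1 / (s + N)) := by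
    rw [mellin_phi_eq, mellin_phi_eq, ← hdiff]; ring
  show (∑ k ∈ Finset.range (N+1), c f k / (s + k)) + mellin (phi f (N+1)) s
      = (∑ k ∈ Finset.range N, c f k / (s + k)) + mellin (phi f N) s
  rw [Finset.sum_range_succ, key]
  ring

lemma F_mono (f : ℝ → ℂ) (hf : ContDiff ℝ (⊤ : ℕ∞) f) (p : ℕ) {N M : ℕ} (hNM : N ≤ M) {z : ℂ}
    (hz : -(N:ℝ) < (z - (p:ℂ)).re) : F f p N z = F f p M z := by
  induction M with
  | zero => simp_all
  | succ m ih =>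
    rcases Nat.lt_or_ge N (m+1) with h | h
    · have hm : N ≤ m := Nat.lt_succ_iff.mp h
      have hle : -(m:ℝ) ≤ -(N:ℝ) := neg_le_neg (by exact_mod_cast hm)
      rw [ih hm, F_succ f hf p m (lt_of_le_of_lt hle hz)]
    · have : N = m + 1 := le_antisymm hNM h
      subst this; rfl

end GilLoyaAux5

namespace GilLoyaAux6

open Filter Asymptotics Complex
open GilLoyaAux GilLoyaAux2 GilLoyaAux3 GilLoyaAux4 GilLoyaAux5

noncomputable def G (f : ℝ → ℂ) (p : ℕ) (z : ℂ) : ℂ :=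
  F f p (Nat.ceil ((p:ℝ) - z.re) + 1) z

lemma re_cond {p N : ℕ} {z : ℂ} (h : (p:ℝ) - N < z.re) : -(N:ℝ) < (z - (p:ℂ)).re := by
  simp [Complex.sub_re]; linarith

lemma G_eq (f : ℝ → ℂ) (hf : ContDiff ℝ (⊤ : ℕ∞) f) (p : ℕ) (N : ℕ) {z : ℂ}
    (h : (p:ℝ) - N < z.re) : G f p z = F f p N z := by
  set N₀ := Nat.ceil ((p:ℝ) - z.re) + 1 with hN₀def
  have hN₀ : (p:ℝ) - N₀ < z.re := by
    have := Nat.le_ceil ((p:ℝ) - z.re)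
    have : (p:ℝ) - z.re < N₀ := by
      rw [hN₀def]; push_cast; linarith
    linarith
  rcases le_total N N₀ with hle | hle
  · exact (F_mono f hf p hle (re_cond h)).symm
  · exact F_mono f hf p hle (re_cond hN₀)

lemma F_diffAt (f : ℝ → ℂ) (hf : ContDiff ℝ (⊤ : ℕ∞) f) (p N : ℕ) {z : ℂ}
    (hz : -(N:ℝ) < (z - (p:ℂ)).re) (hpole : ∀ k, k < N → z ≠ (p:ℂ) - k) :
    DifferentiableAt ℂ (F f p N) z := by
  apply DifferentiableAt.add
  · apply DifferentiableAt.fun_sum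
    intro k hk
    apply DifferentiableAt.div (differentiableAt_const _)
    · exact (differentiableAt_id.sub (differentiableAt_const _)).add (differentiableAt_const _)
    · intro h0
      exact hpole k (Finset.mem_range.mp hk) (by linear_combination h0)
  · exact (mellin_phi_diff f hf N hz).comp (f := fun w : ℂ => w - (p:ℂ)) z
      (differentiableAt_id.sub (differentiableAt_const _))

end GilLoyaAux6

open GilLoyaAux GilLoyaAux2 GilLoyaAux3 GilLoyaAux4 GilLoyaAux5 GilLoyaAux6

/-- For `f : ℝ → ℂ` smooth and `p ∈ ℕ`, there is `G : ℂ → ℂ` holomorphic on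
`ℂ \ {p - k : k ∈ ℕ}` agreeing with `∫_0^1 r^(z-p-1) f(r) dr` for `Re z > p`, with at most
simple poles: `(z - (p-k)) G(z) → f^(k)(0)/k!` as `z → p - k`.  In particular the residue at
`z = 0` (which is `p - p`) equals `f^(p)(0)/p!`. -/
theorem gil_loya_radial_simple_poles (f : ℝ → ℂ) (hf : ContDiff ℝ (⊤ : ℕ∞) f) (p : ℕ) :
    ∃ G : ℂ → ℂ,
      DifferentiableOn ℂ G {z : ℂ | ∀ k : ℕ, z ≠ (p : ℂ) - (k : ℂ)} ∧
      (∀ z : ℂ, (p : ℝ) < z.re →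
        G z = ∫ r in Set.Ioc (0 : ℝ) 1, (r : ℂ) ^ (z - (p : ℂ) - 1) * f r) ∧
      ∀ k : ℕ,
        Filter.Tendsto (fun z : ℂ => (z - ((p : ℂ) - (k : ℂ))) * G z)
          (nhdsWithin ((p : ℂ) - (k : ℂ)) {((p : ℂ) - (k : ℂ))}ᶜ)
          (nhds (iteratedDeriv k f 0 / (Nat.factorial k : ℂ))) := by
  refine ⟨G f p, ?_, ?_, ?_⟩
  · -- differentiability
    intro z hz
    simp only [Set.mem_setOf_eq] at hz
    set N := Nat.ceil ((p:ℝ) - z.re) + 1 with hN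
    have hre : (p:ℝ) - N < z.re := by
      have := Nat.le_ceil ((p:ℝ) - z.re)
      have : (p:ℝ) - z.re < N := by rw [hN]; push_cast; linarith
      linarith
    have hU : {w : ℂ | (p:ℝ) - N < w.re} ∈ nhds z :=
      (isOpen_lt continuous_const Complex.continuous_re).mem_nhds hre
    have heq : G f p =ᶠ[nhds z] F f p N :=
      Filter.eventuallyEq_of_mem hU fun w hw => G_eq f hf p N hw
    exact (heq.differentiableAt_iff.mpr
      (F_diffAt f hf p N (re_cond hre) (fun k _ => hz k))).differentiableWithinAt
  · -- agreement
    intro z hz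
    rw [G_eq f hf p 0 (by simpa using hz)]
    show (0:ℂ) + _ = _
    rw [zero_add, mellin_phi_eq]
    refine setIntegral_congr_fun measurableSet_Ioc fun r _ => ?_
    simp [g]
  · -- simple poles
    intro k
    set z₀ : ℂ := (p:ℂ) - (k:ℂ) with hz₀
    set H : ℂ → ℂ := fun z =>
      (∑ j ∈ Finset.range k, c f j / (z - p + j)) + mellin (phi f (k+1)) (z - p) with hH
    have hz₀re : z₀.re = (p:ℝ) - k := by simp [hz₀, Complex.sub_re]
    have hreN : (p:ℝ) - (k+1 : ℕ) < z₀.re := by rw [hz₀re]; push_cast; linarith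
    have hU : {w : ℂ | (p:ℝ) - ((k:ℕ)+1) < w.re} ∈ nhds z₀ :=
      (isOpen_lt continuous_const Complex.continuous_re).mem_nhds (by exact_mod_cast hreN)
    have hHcont : ContinuousAt H z₀ := by
      apply DifferentiableAt.continuousAt (𝕜 := ℂ)
      apply DifferentiableAt.add
      · apply DifferentiableAt.fun_sum
        intro j hj
        apply DifferentiableAt.div (differentiableAt_const _)
        · exact (differentiableAt_id.sub (differentiableAt_const _)).add
            (differentiableAt_const _)
        · intro h0
          rw [hz₀] at h0
          have : (j : ℂ) = (k : ℂ) := by linear_combination h0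
          exact absurd (Nat.cast_injective this) (Finset.mem_range.mp hj).ne
      · refine (mellin_phi_diff f hf (k+1) ?_).comp (f := fun w : ℂ => w - (p:ℂ)) z₀
          (differentiableAt_id.sub (differentiableAt_const _))
        exact re_cond (by exact_mod_cast hreN)
    have hcont : ContinuousAt (fun z : ℂ => (z - z₀) * H z + c f k) z₀ :=
      ((continuousAt_id.sub continuousAt_const).mul hHcont).add continuousAt_const
    have hT : Filter.Tendsto (fun z => (z - z₀) * H z + c f k)
        (nhdsWithin z₀ {z₀}ᶜ) (nhds (c f k)) := by
      have h0 : (z₀ - z₀) * H z₀ + c f k = c f k := by ring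
      have := hcont.tendsto.mono_left (nhdsWithin_le_nhds (s := {z₀}ᶜ))
      rwa [h0] at this
    have hcongr : (fun z => (z - z₀) * H z + c f k)
        =ᶠ[nhdsWithin z₀ {z₀}ᶜ] (fun z : ℂ => (z - z₀) * G f p z) := by
      filter_upwards [mem_nhdsWithin_of_mem_nhds hU, self_mem_nhdsWithin] with w hw hwne
      have hGw : G f p w = F f p (k+1) w := G_eq f hf p (k+1) (by exact_mod_cast hw)
      have hFw : F f p (k+1) w = H w + c f k / (w - z₀) := by
        show (∑ j ∈ Finset.range (k+1), c f j / (w - p + j)) + _ = _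
        rw [Finset.sum_range_succ, hH]
        have : w - (p:ℂ) + (k:ℂ) = w - z₀ := by rw [hz₀]; ring
        rw [this]; ring
      rw [hGw, hFw]
      have hne : w - z₀ ≠ 0 := sub_ne_zero.mpr (by simpa using hwne)
      have hcan : (w - z₀) * (c f k / (w - z₀)) = c f k := by field_simp
      conv_rhs => rw [mul_add]
      rw [hcan]
    have hc : iteratedDeriv k f 0 / (k.factorial : ℂ) = c f k := rfl
    rw [hc]
    exact hT.congr' hcongr
end

section
/- Let h : ℝ → ℂ be measurable, suppose there exist C > 0 and c > 0 with ‖h(t)‖ ≤ C e^{-ct} for all t ≥ 1, and suppose there exist complex numbers a, b, c₂, and constants ε > 0, C' > 0, such that ‖h(t) - (a + b log t + c₂ (log t)²)‖ ≤ C' t^{ε} for all t ∈ (0,1]. Define ζ(z) = (1/Γ(z)) ∫_0^∞ t^{z-1} h(t) dt for Re z > 0, where Γ is the Gamma function. Then z² ζ(z) → 2 c₂ as z → 0 within the half-plane {Re z > 0}. -/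
open MeasureTheory Set

section ZetaAux
open MeasureTheory Set Filter Asymptotics Real


lemma logpow_isBigO (k : ℕ) : ∀ {b : ℝ}, 0 < b →
    (fun t : ℝ => (Real.log t) ^ k) =O[nhdsWithin 0 (Set.Ioi 0)] (fun t => t ^ (-b)) := by
  induction k with
  | zero =>
    intro b hb
    simp only [pow_zero]
    refine IsBigO.of_bound 1 ?_
    filter_upwards [Ioo_mem_nhdsGT_of_mem (by norm_num : (0:ℝ) ∈ Ico 0 1)] with t ht
    rw [one_mul, Real.norm_eq_abs, Real.norm_eq_abs, abs_one,
      abs_of_pos (Real.rpow_pos_of_pos ht.1 _), Real.rpow_neg ht.1.le]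
    have h1 : t ^ b ≤ 1 := Real.rpow_le_one ht.1.le ht.2.le hb.le
    have h0 : 0 < t ^ b := Real.rpow_pos_of_pos ht.1 _
    exact le_inv_of_le_inv₀ h0 (by simpa using h1)
  | succ k ih =>
    intro b hb
    have h2 : (0:ℝ) < b/2 := by linarith
    have := isBigO_rpow_zero_log_smul (a := b/2) (b := b) (by linarith) (ih h2)
    have heq : (fun t : ℝ => Real.log t • (Real.log t) ^ k)
        = fun t : ℝ => (Real.log t) ^ (k+1) := by
      funext t; rw [smul_eq_mul, pow_succ]; ring
    rwa [heq] at this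

lemma integrableOn_rpow_mul_abs_log_pow (k : ℕ) {x : ℝ} (hx : 0 < x) :
    IntegrableOn (fun t : ℝ => t ^ (x - 1) * |Real.log t| ^ k) (Ioc 0 1) := by
  have hmeas : AEStronglyMeasurable (fun t : ℝ => |Real.log t| ^ k)
      (volume.restrict (Ioi 0)) :=
    ((Real.measurable_log.norm).pow_const k).aestronglyMeasurable
  have hO : (fun t : ℝ => |Real.log t| ^ k) =O[nhdsWithin 0 (Set.Ioi 0)]
      (fun t => t ^ (-(x/2))) := by
    have := (logpow_isBigO k (half_pos hx)).norm_left
    simpa [abs_pow] using this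
  obtain ⟨c, hc, hint⟩ := mellin_convergent_zero_of_isBigO hmeas hO (by linarith : x/2 < x)
  have hm1 : (0:ℝ) < min c 1 := lt_min hc one_pos
  have hsplit : Ioc (0:ℝ) 1 = Ioc 0 (min c 1) ∪ Ioc (min c 1) 1 :=
    (Ioc_union_Ioc_eq_Ioc hm1.le (min_le_right _ _)).symm
  rw [hsplit]
  refine IntegrableOn.union ?_ ?_
  · exact hint.mono_set (Ioc_subset_Ioc_right (min_le_left _ _))
  · refine (ContinuousOn.integrableOn_Icc ?_).mono_set Ioc_subset_Icc_self
    intro t ht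
    have ht0 : 0 < t := lt_of_lt_of_le hm1 ht.1
    exact ((Real.continuousAt_rpow_const t (x-1) (Or.inl ht0.ne')).continuousWithinAt).mul
      (((Real.continuousAt_log ht0.ne').abs.pow k).continuousWithinAt)

lemma integrableOn_cpow_mul_log_pow (k : ℕ) {z : ℂ} (hz : 0 < z.re) :
    IntegrableOn (fun t : ℝ => (t:ℂ) ^ (z-1) * ((Real.log t : ℂ)) ^ k) (Ioc 0 1) := by
  have hmeas : AEStronglyMeasurable (fun t : ℝ => ((Real.log t : ℂ)) ^ k)
      (volume.restrict (Ioi 0)) :=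
    ((Complex.measurable_ofReal.comp Real.measurable_log).pow_const k).aestronglyMeasurable
  have := (mellin_convergent_iff_norm (f := fun t : ℝ => ((Real.log t : ℂ)) ^ k)
      (T := Ioc 0 1) Ioc_subset_Ioi_self measurableSet_Ioc hmeas (s := z)).mpr ?_
  · simpa [smul_eq_mul] using this
  · refine (integrableOn_rpow_mul_abs_log_pow k hz).congr_fun (fun t ht => ?_) measurableSet_Ioc
    simp [abs_pow]

lemma tendsto_cpow_mul_log_pow (k : ℕ) {z : ℂ} (hz : 0 < z.re) :
    Filter.Tendsto (fun t : ℝ => (t:ℂ) ^ z * ((Real.log t : ℂ)) ^ k)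
      (nhdsWithin 0 (Set.Ioi 0)) (nhds 0) := by
  obtain ⟨d, hd⟩ := (logpow_isBigO k (b := z.re/2) (by linarith)).bound
  refine squeeze_zero_norm' (a := fun t : ℝ => d * t ^ (z.re/2)) ?_ ?_
  · filter_upwards [hd, self_mem_nhdsWithin] with t hbd (ht : 0 < t)
    rw [norm_mul, norm_pow,
      Complex.norm_cpow_eq_rpow_re_of_pos ht, Complex.norm_real, Real.norm_eq_abs]
    have h1 : |Real.log t| ^ k ≤ d * t ^ (-(z.re/2)) := by
      have := hbd
      rwa [Real.norm_eq_abs, abs_pow, Real.norm_eq_abs,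
        abs_of_pos (Real.rpow_pos_of_pos ht _)] at this
    calc t ^ z.re * |Real.log t| ^ k ≤ t ^ z.re * (d * t ^ (-(z.re/2))) := by
          exact mul_le_mul_of_nonneg_left h1 (Real.rpow_nonneg ht.le _)
      _ = d * t ^ (z.re/2) := by
          rw [mul_comm, mul_assoc, ← Real.rpow_add ht]
          congr 2
          ring
  · have : Filter.Tendsto (fun t : ℝ => t ^ (z.re/2)) (nhds 0) (nhds ((0:ℝ) ^ (z.re/2))) :=
      (Real.continuousAt_rpow_const 0 (z.re/2) (Or.inr (by linarith))).tendsto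
    rw [Real.zero_rpow (by linarith : z.re/2 ≠ 0)] at this
    simpa using (this.mono_left nhdsWithin_le_nhds).const_mul d


set_option maxHeartbeats 1000000 in
lemma integral_Ioc_cpow_mul_logpoly {z : ℂ} (hz : 0 < z.re) (a b c₂ : ℂ) :
    ∫ t in Ioc (0:ℝ) 1, (t:ℂ) ^ (z-1) *
        (a + b * (Real.log t : ℂ) + c₂ * (Real.log t : ℂ) ^ 2)
      = a/z - b/z^2 + 2*c₂/z^3 := by
  have hz0 : z ≠ 0 := by intro hz0; rw [hz0] at hz; simp at hz
  set A : ℂ := a/z - b/z^2 + 2*c₂/z^3 with hA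
  set B : ℂ := b/z - 2*c₂/z^2 with hB
  set Cc : ℂ := c₂/z with hCc
  set F : ℝ → ℂ := fun t =>
    (t:ℂ) ^ z * (A + B * (Real.log t : ℂ) + Cc * (Real.log t : ℂ) ^ 2) with hF
  -- derivative
  have hderiv : ∀ t : ℝ, t ∈ Ioi (0:ℝ) → HasDerivAt F
      ((t:ℂ) ^ (z-1) * (a + b * (Real.log t : ℂ) + c₂ * (Real.log t : ℂ) ^ 2)) t := by
    intro t ht
    have ht0 : (0:ℝ) < t := ht
    have htne : (t:ℂ) ≠ 0 := Complex.ofReal_ne_zero.mpr ht0.ne'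
    have hlog : HasDerivAt (fun y : ℝ => ((Real.log y : ℂ))) ((t⁻¹ : ℝ) : ℂ) t :=
      (Real.hasDerivAt_log ht0.ne').ofReal_comp
    have hl2 : HasDerivAt (fun y : ℝ => ((Real.log y : ℂ)) ^ 2)
        (2 * (Real.log t : ℂ) * ((t⁻¹ : ℝ) : ℂ)) t := by
      have h2 := hlog.mul hlog
      have heq : (fun y : ℝ => ((Real.log y : ℂ)) * ((Real.log y : ℂ)))
          = fun y : ℝ => ((Real.log y : ℂ)) ^ 2 := by funext y; ring
      simp only [Pi.mul_def] at h2
      rw [heq] at h2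
      refine h2.congr_deriv ?_
      ring
    have hq := ((hlog.const_mul B).const_add A).add (hl2.const_mul Cc)
    have hp : HasDerivAt (fun y : ℝ => (y:ℂ) ^ z) (z * (t:ℂ) ^ (z-1)) t := by
      have hr : (z - 1) ≠ -1 := by
        intro hr; apply hz0; have : z - 1 + 1 = -1 + 1 := by rw [hr]
        simpa using this
      have h0 := hasDerivAt_ofReal_cpow_const' ht0.ne' hr
      rw [sub_add_cancel] at h0
      have h1 := h0.const_mul z
      have hfun : (fun y : ℝ => z * ((y:ℂ) ^ z / z)) = fun y : ℝ => (y:ℂ) ^ z := by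
        funext y; field_simp
      rwa [hfun] at h1
    have := hp.mul hq
    simp only [Pi.add_apply] at this
    refine this.congr_deriv ?_
    have hzz : (t:ℂ) ^ z = (t:ℂ) ^ (z-1) * (t:ℂ) := by
      conv_lhs => rw [show z = z - 1 + 1 by ring, Complex.cpow_add _ _ htne, Complex.cpow_one]
    have e1 : z * A + B = a := by rw [hA, hB]; field_simp [hz0]; ring
    have e2 : z * B + 2 * Cc = b := by rw [hB, hCc]; field_simp [hz0]; ring
    have e3 : z * Cc = c₂ := by rw [hCc]; field_simp [hz0]
    rw [hzz, Complex.ofReal_inv, ← e1, ← e2, ← e3]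
    field_simp [hz0, htne]
    ring
  -- value at 1 and limit at 0
  have hF1 : F 1 = A := by simp [hF]
  have hFlim : Filter.Tendsto F (nhdsWithin 0 (Set.Ioi 0)) (nhds 0) := by
    have h0 := (tendsto_cpow_mul_log_pow 0 hz).mul_const A
    have h1 := (tendsto_cpow_mul_log_pow 1 hz).mul_const B
    have h2 := (tendsto_cpow_mul_log_pow 2 hz).mul_const Cc
    have := (h0.add h1).add h2
    simp only [zero_mul, add_zero] at this
    refine this.congr (fun t => ?_)
    simp only [hF, pow_zero, pow_one]
    ring
  -- monotone family
  set s : ℕ → Set ℝ := fun n => Ioc ((n:ℝ)+1)⁻¹ 1 with hs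
  have hsm : ∀ n, MeasurableSet (s n) := fun n => measurableSet_Ioc
  have hmono : Monotone s := by
    intro m n hmn
    refine Ioc_subset_Ioc_left ?_
    have h1 : (0:ℝ) < (m:ℝ)+1 := by positivity
    have h2 : (m:ℝ)+1 ≤ (n:ℝ)+1 := by exact_mod_cast by omega
    exact inv_anti₀ h1 h2
  have hunion : (⋃ n, s n) = Ioc (0:ℝ) 1 := by
    ext t
    simp only [mem_iUnion, hs, mem_Ioc]
    constructor
    · rintro ⟨n, h1, h2⟩
      exact ⟨lt_trans (by positivity) h1, h2⟩
    · rintro ⟨h1, h2⟩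
      obtain ⟨n, hn⟩ := exists_nat_one_div_lt h1
      exact ⟨n, by rwa [one_div] at hn, h2⟩
  have hint : IntegrableOn (fun t : ℝ => (t:ℂ) ^ (z-1) *
      (a + b * (Real.log t : ℂ) + c₂ * (Real.log t : ℂ) ^ 2)) (Ioc 0 1) := by
    have h0 := (integrableOn_cpow_mul_log_pow 0 hz).const_mul a
    have h1 := (integrableOn_cpow_mul_log_pow 1 hz).const_mul b
    have h2 := (integrableOn_cpow_mul_log_pow 2 hz).const_mul c₂
    refine ((h0.add h1).add h2).congr ?_
    refine Filter.Eventually.of_forall (fun t => ?_)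
    simp only [Pi.add_apply, pow_zero, pow_one, mul_one]
    ring
  have htend := tendsto_setIntegral_of_monotone hsm hmono (hunion ▸ hint)
  rw [hunion] at htend
  -- each partial integral equals F 1 - F εₙ
  have hpart : ∀ n : ℕ, (∫ t in s n, (t:ℂ) ^ (z-1) *
      (a + b * (Real.log t : ℂ) + c₂ * (Real.log t : ℂ) ^ 2))
      = F 1 - F (((n:ℝ)+1)⁻¹) := by
    intro n
    have hε0 : (0:ℝ) < ((n:ℝ)+1)⁻¹ := by positivity
    have hε1 : ((n:ℝ)+1)⁻¹ ≤ 1 := by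
      rw [inv_le_one_iff₀]; right; exact_mod_cast by omega
    rw [hs, ← intervalIntegral.integral_of_le hε1]
    refine intervalIntegral.integral_eq_sub_of_hasDerivAt (fun x hx => ?_) ?_
    · rw [uIcc_of_le hε1] at hx
      exact hderiv x (lt_of_lt_of_le hε0 hx.1)
    · apply ContinuousOn.intervalIntegrable
      intro x hx
      rw [uIcc_of_le hε1] at hx
      have hx0 : 0 < x := lt_of_lt_of_le hε0 hx.1
      refine ((Complex.continuousAt_ofReal_cpow_const x (z-1) (Or.inr hx0.ne')).continuousWithinAt).mul ?_
      have hlogc : ContinuousAt (fun y : ℝ => ((Real.log y : ℂ))) x :=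
        Complex.continuous_ofReal.continuousAt.comp (Real.continuousAt_log hx0.ne')
      exact ((continuousAt_const.add (continuousAt_const.mul hlogc)).add
        (continuousAt_const.mul (hlogc.pow 2))).continuousWithinAt
  have hεtend : Filter.Tendsto (fun n : ℕ => ((n:ℝ)+1)⁻¹) atTop (nhdsWithin 0 (Set.Ioi 0)) := by
    rw [tendsto_nhdsWithin_iff]
    constructor
    · have := tendsto_one_div_add_atTop_nhds_zero_nat (𝕜 := ℝ)
      simpa [one_div] using this
    · exact Filter.Eventually.of_forall (fun n => mem_Ioi.mpr (by positivity))
  have htend2 : Filter.Tendsto (fun n : ℕ => (∫ t in s n, (t:ℂ) ^ (z-1) *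
      (a + b * (Real.log t : ℂ) + c₂ * (Real.log t : ℂ) ^ 2))) atTop (nhds A) := by
    rw [funext hpart]
    have := (hFlim.comp hεtend).const_sub (F 1)
    simpa [hF1] using this
  have := tendsto_nhds_unique htend htend2
  rw [this]


set_option maxHeartbeats 1000000 in
/-- Let `h : ℝ → ℂ` be measurable, exponentially decaying for `t ≥ 1`, with
`h(t) = a + b log t + c₂ (log t)² + O(t^ε)` on `(0,1]`.  Then the zeta function
`ζ(z) = (1/Γ(z)) ∫_0^∞ t^(z-1) h(t) dt` satisfies `z² ζ(z) → 2 c₂` as `z → 0` in the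
half-plane `Re z > 0` (a double pole at `0` with leading coefficient `2 c₂`). -/
theorem zeta_double_pole_from_log_squared (h : ℝ → ℂ) (hm : Measurable h)
    (C c : ℝ) (hC : 0 < C) (hc : 0 < c)
    (hlarge : ∀ t : ℝ, 1 ≤ t → ‖h t‖ ≤ C * Real.exp (-c * t))
    (a b c₂ : ℂ) (ε C' : ℝ) (hε : 0 < ε) (hC' : 0 < C')
    (hsmall : ∀ t ∈ Set.Ioc (0 : ℝ) 1,
      ‖h t - (a + b * (Real.log t : ℂ) + c₂ * (Real.log t : ℂ) ^ 2)‖ ≤ C' * t ^ ε) :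
    Filter.Tendsto
      (fun z : ℂ => z ^ 2 *
        (1 / Complex.Gamma z * ∫ t in Set.Ioi (0 : ℝ), (t : ℂ) ^ (z - 1) * h t))
      (nhdsWithin 0 {z : ℂ | 0 < z.re}) (nhds (2 * c₂)) := by
  set S : Set ℂ := {z : ℂ | 0 < z.re} with hS
  set g : ℝ → ℂ := fun t => a + b * (Real.log t : ℂ) + c₂ * (Real.log t : ℂ) ^ 2 with hgdef
  have hgm : Measurable g := by
    have hl : Measurable fun t : ℝ => ((Real.log t : ℂ)) :=
      Complex.measurable_ofReal.comp Real.measurable_log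
    exact (measurable_const.add ((hl.const_mul b))).add ((hl.pow_const 2).const_mul c₂)
  set r : ℝ → ℂ := fun t => h t - g t with hrdef
  have hrm : Measurable r := hm.sub hgm
  set R : ℂ → ℂ := fun z => ∫ t in Ioc (0:ℝ) 1, (t:ℂ) ^ (z-1) * r t with hRdef
  set I : ℂ → ℂ := fun z => ∫ t in Ioi (1:ℝ), (t:ℂ) ^ (z-1) * h t with hIdef
  -- measurability of the cpow factor on subsets of (0,∞)
  have cpow_meas : ∀ (z : ℂ) (T : Set ℝ), MeasurableSet T → T ⊆ Ioi 0 →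
      AEStronglyMeasurable (fun t : ℝ => (t:ℂ) ^ (z-1)) (volume.restrict T) := by
    intro z T hTm hTsub
    refine (continuousOn_of_forall_continuousAt (fun t ht => ?_)).aestronglyMeasurable hTm
    exact Complex.continuousAt_ofReal_cpow_const t (z-1) (Or.inr (ne_of_gt (hTsub ht)))
  -- norm identity
  have hnorm : ∀ (z : ℂ) (t : ℝ), 0 < t → ∀ (w : ℂ),
      ‖(t:ℂ) ^ (z-1) * w‖ = t ^ (z.re - 1) * ‖w‖ := by
    intro z t ht w
    rw [norm_mul, Complex.norm_cpow_eq_rpow_re_of_pos ht,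
      Complex.sub_re, Complex.one_re]
  -- integrability of main part on (0,1]
  have hIntMain : ∀ z : ℂ, 0 < z.re →
      IntegrableOn (fun t : ℝ => (t:ℂ) ^ (z-1) * g t) (Ioc 0 1) := by
    intro z hz
    have h0 := (integrableOn_cpow_mul_log_pow 0 hz).const_mul a
    have h1 := (integrableOn_cpow_mul_log_pow 1 hz).const_mul b
    have h2 := (integrableOn_cpow_mul_log_pow 2 hz).const_mul c₂
    refine ((h0.add h1).add h2).congr (Filter.Eventually.of_forall (fun t => ?_))
    simp only [hgdef, Pi.add_apply, pow_zero, pow_one, mul_one]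
    ring
  -- integrability of remainder on (0,1] and bound
  have hdom : IntegrableOn (fun t : ℝ => C' * t ^ (ε - 1)) (Ioc 0 1) := by
    have := intervalIntegral.intervalIntegrable_rpow' (a := 0) (b := 1)
      (show (-1:ℝ) < ε - 1 by linarith)
    rw [intervalIntegrable_iff_integrableOn_Ioc_of_le zero_le_one] at this
    exact this.const_mul C'
  have hIntR : ∀ z : ℂ, 0 < z.re →
      IntegrableOn (fun t : ℝ => (t:ℂ) ^ (z-1) * r t) (Ioc 0 1) := by
    intro z hz
    refine Integrable.mono' hdom
      (((cpow_meas z _ measurableSet_Ioc Ioc_subset_Ioi_self)).mul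
        (hrm.aestronglyMeasurable.restrict)) ?_
    refine (ae_restrict_iff' measurableSet_Ioc).mpr (Filter.Eventually.of_forall (fun t ht => ?_))
    rw [hnorm z t ht.1]
    calc t ^ (z.re - 1) * ‖r t‖ ≤ t ^ (z.re - 1) * (C' * t ^ ε) :=
          mul_le_mul_of_nonneg_left (hsmall t ht) (Real.rpow_nonneg ht.1.le _)
      _ = C' * t ^ (z.re - 1 + ε) := by rw [Real.rpow_add ht.1]; ring
      _ ≤ C' * t ^ (ε - 1) := by
          refine mul_le_mul_of_nonneg_left ?_ hC'.le
          exact Real.rpow_le_rpow_of_exponent_ge ht.1 ht.2 (by linarith)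
  have hRbound : ∀ z : ℂ, 0 < z.re → ‖R z‖ ≤ ∫ t in Ioc (0:ℝ) 1, C' * t ^ (ε - 1) := by
    intro z hz
    refine norm_integral_le_of_norm_le hdom ?_
    refine (ae_restrict_iff' measurableSet_Ioc).mpr (Filter.Eventually.of_forall (fun t ht => ?_))
    rw [hnorm z t ht.1]
    calc t ^ (z.re - 1) * ‖r t‖ ≤ t ^ (z.re - 1) * (C' * t ^ ε) :=
          mul_le_mul_of_nonneg_left (hsmall t ht) (Real.rpow_nonneg ht.1.le _)
      _ = C' * t ^ (z.re - 1 + ε) := by rw [Real.rpow_add ht.1]; ring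
      _ ≤ C' * t ^ (ε - 1) := by
          refine mul_le_mul_of_nonneg_left ?_ hC'.le
          exact Real.rpow_le_rpow_of_exponent_ge ht.1 ht.2 (by linarith)
  -- integrability on (1,∞)
  have hexpint : IntegrableOn (fun t : ℝ => C * Real.exp (-c * t)) (Ioi 1) :=
    (exp_neg_integrableOn_Ioi 1 hc).const_mul C
  have hIntI : ∀ z : ℂ, IntegrableOn (fun t : ℝ => (t:ℂ) ^ (z-1) * h t) (Ioi 1) := by
    intro z
    have hgI : IntegrableOn (fun t : ℝ => t ^ (z.re - 1) * (C * Real.exp (-c * t))) (Ioi 1) := by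
      refine integrable_of_isBigO_exp_neg (half_pos hc) ?_ ?_
      · intro t ht
        have ht0 : (0:ℝ) < t := lt_of_lt_of_le one_pos ht
        exact ((Real.continuousAt_rpow_const t _ (Or.inl ht0.ne')).continuousWithinAt).mul
          (continuousAt_const.mul
            (Real.continuous_exp.continuousAt.comp
              ((continuous_const.mul continuous_id).continuousAt))).continuousWithinAt
      · have h1 := (isLittleO_rpow_exp_pos_mul_atTop (z.re - 1) (half_pos hc)).isBigO
        have h2 := h1.mul (isBigO_refl (fun t : ℝ => C * Real.exp (-c * t)) atTop)
        have heq : (fun x : ℝ => Real.exp (c/2 * x) * (C * Real.exp (-c * x)))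
            = fun x : ℝ => C * Real.exp (-(c/2) * x) := by
          funext x
          rw [mul_comm (Real.exp (c/2*x)), mul_assoc, ← Real.exp_add]
          ring_nf
        rw [heq] at h2
        exact h2.trans ((isBigO_refl (fun x : ℝ => Real.exp (-(c/2) * x)) atTop).const_mul_left C)
    refine Integrable.mono' hgI
      (((cpow_meas z _ measurableSet_Ioi (Ioi_subset_Ioi zero_le_one))).mul
        (hm.aestronglyMeasurable.restrict)) ?_
    refine (ae_restrict_iff' measurableSet_Ioi).mpr (Filter.Eventually.of_forall (fun t ht => ?_))
    have ht1 : (1:ℝ) ≤ t := le_of_lt ht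
    rw [hnorm z t (lt_of_lt_of_le one_pos ht1)]
    exact mul_le_mul_of_nonneg_left (hlarge t ht1)
      (Real.rpow_nonneg (le_trans zero_le_one ht1) _)
  have hIbound : ∀ z : ℂ, z.re ≤ 1 → ‖I z‖ ≤ ∫ t in Ioi (1:ℝ), C * Real.exp (-c * t) := by
    intro z hz1
    refine norm_integral_le_of_norm_le hexpint ?_
    refine (ae_restrict_iff' measurableSet_Ioi).mpr (Filter.Eventually.of_forall (fun t ht => ?_))
    have ht1 : (1:ℝ) ≤ t := le_of_lt ht
    rw [hnorm z t (lt_of_lt_of_le one_pos ht1)]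
    calc t ^ (z.re - 1) * ‖h t‖ ≤ 1 * (C * Real.exp (-c * t)) := by
          refine mul_le_mul ?_ (hlarge t ht1) (norm_nonneg _) zero_le_one
          exact Real.rpow_le_one_of_one_le_of_nonpos ht1 (by linarith)
      _ = C * Real.exp (-c * t) := one_mul _
  -- the key algebraic identity
  have key : ∀ z : ℂ, 0 < z.re →
      z ^ 2 * (1 / Complex.Gamma z * ∫ t in Set.Ioi (0:ℝ), (t:ℂ) ^ (z-1) * h t)
        = (Complex.Gamma (z+1))⁻¹ *
            ((a * z ^ 2 - b * z + 2 * c₂) + (z ^ 3 * R z + z ^ 3 * I z)) := by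
    intro z hz
    have hz0 : z ≠ 0 := by intro hz0; rw [hz0] at hz; simp at hz
    have hsplit : (∫ t in Set.Ioi (0:ℝ), (t:ℂ) ^ (z-1) * h t)
        = (∫ t in Ioc (0:ℝ) 1, (t:ℂ) ^ (z-1) * h t) + I z := by
      rw [hIdef, ← setIntegral_union (Set.Ioc_disjoint_Ioi le_rfl) measurableSet_Ioi
        ?_ (hIntI z), Ioc_union_Ioi_eq_Ioi zero_le_one]
      refine ((hIntMain z hz).add (hIntR z hz)).congr
        (Filter.Eventually.of_forall (fun t => ?_))
      simp only [hrdef, Pi.add_apply]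
      ring
    have hsplit2 : (∫ t in Ioc (0:ℝ) 1, (t:ℂ) ^ (z-1) * h t)
        = (a/z - b/z^2 + 2*c₂/z^3) + R z := by
      have heq : ∀ t : ℝ, (t:ℂ) ^ (z-1) * h t
          = (t:ℂ) ^ (z-1) * g t + (t:ℂ) ^ (z-1) * r t := by
        intro t; simp only [hrdef]; ring
      rw [show (fun t : ℝ => (t:ℂ) ^ (z-1) * h t) = _ from funext heq] at *
      rw [integral_add (hIntMain z hz) (hIntR z hz), hRdef]
      congr 1
      exact integral_Ioc_cpow_mul_logpoly hz a b c₂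
    have hΓ : Complex.Gamma (z+1) = z * Complex.Gamma z := Complex.Gamma_add_one z hz0
    have hΓne : Complex.Gamma z ≠ 0 := Complex.Gamma_ne_zero_of_re_pos hz
    rw [hsplit, hsplit2, hΓ]
    field_simp [hz0, hΓne]
    ring
  -- the limit of the right-hand side
  have T1 : Filter.Tendsto (fun z : ℂ => (Complex.Gamma (z+1))⁻¹)
      (nhdsWithin 0 S) (nhds 1) := by
    have hcont : Continuous fun z : ℂ => (Complex.Gamma (z+1))⁻¹ :=
      Complex.differentiable_one_div_Gamma.continuous.comp (continuous_id.add continuous_const)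
    have := hcont.tendsto 0
    simp only [zero_add, Complex.Gamma_one, inv_one] at this
    exact this.mono_left nhdsWithin_le_nhds
  have T2 : Filter.Tendsto (fun z : ℂ => a * z ^ 2 - b * z + 2 * c₂)
      (nhdsWithin 0 S) (nhds (2 * c₂)) := by
    have hcont : Continuous fun z : ℂ => a * z ^ 2 - b * z + 2 * c₂ := by continuity
    have h2 : a * (0:ℂ) ^ 2 - b * 0 + 2 * c₂ = 2 * c₂ := by ring
    exact (h2 ▸ hcont.tendsto 0).mono_left nhdsWithin_le_nhds
  have T3 : Filter.Tendsto (fun z : ℂ => z ^ 3 * R z) (nhdsWithin 0 S) (nhds 0) := by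
    refine squeeze_zero_norm'
      (a := fun z : ℂ => ‖z‖ ^ 3 * (∫ t in Ioc (0:ℝ) 1, C' * t ^ (ε - 1))) ?_ ?_
    · filter_upwards [self_mem_nhdsWithin] with z hz
      rw [norm_mul, norm_pow]
      exact mul_le_mul_of_nonneg_left (hRbound z hz) (pow_nonneg (norm_nonneg z) 3)
    · have hcont : Continuous fun z : ℂ => ‖z‖ ^ 3 * (∫ t in Ioc (0:ℝ) 1, C' * t ^ (ε - 1)) :=
        (continuous_norm.pow 3).mul continuous_const
      have := hcont.tendsto 0
      simp only [norm_zero, zero_pow, zero_mul, ne_eq, OfNat.ofNat_ne_zero,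
        not_false_eq_true] at this
      exact this.mono_left nhdsWithin_le_nhds
  have T4 : Filter.Tendsto (fun z : ℂ => z ^ 3 * I z) (nhdsWithin 0 S) (nhds 0) := by
    have h01 : {z : ℂ | z.re < 1} ∈ nhds (0:ℂ) := by
      refine IsOpen.mem_nhds (isOpen_lt Complex.continuous_re continuous_const) ?_
      simp
    refine squeeze_zero_norm'
      (a := fun z : ℂ => ‖z‖ ^ 3 * (∫ t in Ioi (1:ℝ), C * Real.exp (-c * t))) ?_ ?_
    · filter_upwards [mem_nhdsWithin_of_mem_nhds h01] with z hz1
      rw [norm_mul, norm_pow]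
      exact mul_le_mul_of_nonneg_left (hIbound z (le_of_lt hz1)) (pow_nonneg (norm_nonneg z) 3)
    · have hcont : Continuous fun z : ℂ => ‖z‖ ^ 3 * (∫ t in Ioi (1:ℝ), C * Real.exp (-c * t)) :=
        (continuous_norm.pow 3).mul continuous_const
      have := hcont.tendsto 0
      simp only [norm_zero, zero_pow, zero_mul, ne_eq, OfNat.ofNat_ne_zero,
        not_false_eq_true] at this
      exact this.mono_left nhdsWithin_le_nhds
  have hRHS := T1.mul (T2.add (T3.add T4))
  simp only [add_zero] at hRHS
  rw [one_mul] at hRHS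
  refine hRHS.congr' ?_
  filter_upwards [self_mem_nhdsWithin] with z hz
  exact (key z hz).symm


end ZetaAux
end

section
/- Let h : ℝ → ℂ be measurable, suppose there exist C > 0 and c > 0 with ‖h(t)‖ ≤ C e^{-ct} for all t ≥ 1, and suppose there exist complex numbers a, b and constants ε > 0, C' > 0, such that ‖h(t) - (a + b log t)‖ ≤ C' t^{ε} for all t ∈ (0,1]. Define ζ(z) = (1/Γ(z)) ∫_0^∞ t^{z-1} h(t) dt for Re z > 0, where Γ is the Gamma function. Then z ζ(z) → -b as z → 0 within the half-plane {Re z > 0}. -/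
/-!
Write `h = a + b log t + g` on `(0, 1]` and `h = g` on `(1, ∞)`. The Mellin transforms of `1` and
`log t` on `(0, 1]` are `1/z` and `-1/z²`, the second being the derivative of the first, while `g`
is `O(t^ε)` at `0` and exponentially small at `∞`, so its Mellin transform `M g` is holomorphic
near `0`. Hence, by `Γ(z + 1) = z Γ(z)`,
`z ζ(z) = a / Γ(z) - b / Γ(z + 1) + z M g(z) / Γ(z)`,
which tends to `-b` because `1/Γ` is entire with `1/Γ(0) = 0` and `1/Γ(1) = 1`.
-/

open MeasureTheory Set

open Filter Topology Asymptotics Complex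

theorem locallyIntegrableOn_of_forall_norm_le {X E : Type*} [TopologicalSpace X]
    [MeasurableSpace X] [NormedAddCommGroup E] {μ : Measure X} [IsLocallyFiniteMeasure μ]
    {f : X → E} {s : Set X} (hs : MeasurableSet s) (hf : AEStronglyMeasurable f μ) {M : ℝ}
    (hM : ∀ x ∈ s, ‖f x‖ ≤ M) : LocallyIntegrableOn f s μ := by
  intro x _
  obtain ⟨U, hU, hUfin⟩ := μ.finiteAt_nhds x
  refine ⟨s ∩ U, inter_mem_nhdsWithin s hU, Measure.integrableOn_of_bounded (M := M)
    (measure_mono inter_subset_right |>.trans_lt hUfin).ne hf ?_⟩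
  exact ae_restrict_of_ae_restrict_of_subset inter_subset_left
    ((ae_restrict_iff' hs).2 (Eventually.of_forall hM))

theorem locallyIntegrableOn_Ioi_of_norm_le_rpow_of_norm_le_exp {E : Type*}
    [NormedAddCommGroup E] {g : ℝ → E} (hg : AEStronglyMeasurable g) {C c C' ε : ℝ}
    (hC : 0 ≤ C) (hc : 0 ≤ c) (hC' : 0 ≤ C') (hε : 0 ≤ ε)
    (hsmall : ∀ t ∈ Ioc 0 1, ‖g t‖ ≤ C' * t ^ ε)
    (hlarge : ∀ t, 1 < t → ‖g t‖ ≤ C * Real.exp (-c * t)) :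
    LocallyIntegrableOn g (Ioi 0) := by
  refine locallyIntegrableOn_of_forall_norm_le measurableSet_Ioi hg (M := max C' C) ?_
  intro t (ht : 0 < t)
  rcases le_or_gt t 1 with ht1 | ht1
  · exact (hsmall t ⟨ht, ht1⟩).trans <| le_max_of_le_left <|
      mul_le_of_le_one_right hC' (Real.rpow_le_one ht.le ht1 hε)
  · exact (hlarge t ht1).trans <| le_max_of_le_right <|
      mul_le_of_le_one_right hC (Real.exp_le_one_iff.2 (by nlinarith))

theorem hasMellin_indicator_Ioc_log {s : ℂ} (hs : 0 < s.re) :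
    HasMellin ((Ioc 0 1).indicator fun t : ℝ => (Real.log t : ℂ)) s (-1 / s ^ 2) := by
  set χ : ℝ → ℂ := (Ioc 0 1).indicator fun _ => 1
  have hχ_loc : LocallyIntegrableOn χ (Ioi 0) :=
    locallyIntegrableOn_of_forall_norm_le measurableSet_Ioi
      (measurable_const.indicator measurableSet_Ioc).aestronglyMeasurable (M := 1)
      fun t _ => by by_cases ht : t ∈ Ioc (0 : ℝ) 1 <;> simp [χ, ht]
  have hχ_top : χ =O[atTop] (· ^ (-(s.re + 1))) := by
    refine EventuallyEq.trans_isBigO ?_ (isBigO_zero _ _)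
    filter_upwards [eventually_gt_atTop 1] with t ht
    exact indicator_of_notMem (fun hmem => hmem.2.not_gt ht) _
  have hχ_bot : χ =O[𝓝[>] 0] (· ^ (-(0 : ℝ))) := by
    refine IsBigO.of_bound 1 (Eventually.of_forall fun t => ?_)
    by_cases ht : t ∈ Ioc (0 : ℝ) 1 <;> simp [χ, ht]
  obtain ⟨hconv, hderiv⟩ :=
    mellin_hasDerivAt_of_isBigO_rpow hχ_loc hχ_top (lt_add_one _) hχ_bot hs
  have hχ_eq : mellin χ =ᶠ[𝓝 s] fun w => w⁻¹ := by
    filter_upwards [(isOpen_lt continuous_const continuous_re).mem_nhds hs] with w hw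
    simpa only [one_div] using (hasMellin_one_Ioc hw).2
  have hlog : (fun t : ℝ => Real.log t • χ t) = (Ioc 0 1).indicator fun t => (Real.log t : ℂ) := by
    ext t
    by_cases ht : t ∈ Ioc (0 : ℝ) 1 <;> simp [χ, ht]
  rw [← hlog]
  refine ⟨hconv, ?_⟩
  have hs0 : s ≠ 0 := by rintro rfl; simp at hs
  rw [(hderiv.congr_of_eventuallyEq hχ_eq.symm).unique (hasDerivAt_inv hs0)]
  ring

theorem hasMellin_indicator_Ioc_const_add_log (a b : ℂ) {s : ℂ} (hs : 0 < s.re) :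
    HasMellin ((Ioc 0 1).indicator fun t : ℝ => a + b * Real.log t) s (a / s - b / s ^ 2) := by
  have hconst := hasMellin_const_smul (hasMellin_one_Ioc hs).1 a
  have hlog := hasMellin_const_smul (hasMellin_indicator_Ioc_log hs).1 b
  have hsum := hasMellin_add hconst.1 hlog.1
  have hfun : (fun t => a • (Ioc 0 1).indicator (fun _ => (1 : ℂ)) t +
      b • (Ioc 0 1).indicator (fun t : ℝ => (Real.log t : ℂ)) t) =
      (Ioc 0 1).indicator fun t : ℝ => a + b * Real.log t := by
    ext t
    by_cases ht : t ∈ Ioc (0 : ℝ) 1 <;> simp [ht]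
  rw [← hfun]
  refine ⟨hsum.1, ?_⟩
  rw [hsum.2, hconst.2, hlog.2, (hasMellin_one_Ioc hs).2, (hasMellin_indicator_Ioc_log hs).2]
  simp only [smul_eq_mul]
  ring

theorem tendsto_mul_one_div_Gamma_mul_of_double_pole {F : ℂ → ℂ} (hF : ContinuousAt F 0)
    (a b : ℂ) :
    Tendsto (fun z => z * (1 / Gamma z * (a / z - b / z ^ 2 + F z))) (𝓝[≠] 0) (𝓝 (-b)) := by
  have hcont : ContinuousAt
      (fun z => a * (Gamma z)⁻¹ - b * (Gamma (z + 1))⁻¹ + z * F z * (Gamma z)⁻¹) 0 := by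
    have hinv := differentiable_one_div_Gamma.continuous
    exact ((continuousAt_const.mul hinv.continuousAt).sub (continuousAt_const.mul
      (hinv.comp (continuous_add_const 1)).continuousAt)).add
      ((continuousAt_id.mul hF).mul hinv.continuousAt)
  have hvalue : a * (Gamma 0)⁻¹ - b * (Gamma (0 + 1))⁻¹ + 0 * F 0 * (Gamma 0)⁻¹ = -b := by
    simp
  refine ((hvalue ▸ hcont.tendsto).mono_left nhdsWithin_le_nhds).congr' ?_
  filter_upwards [self_mem_nhdsWithin] with z (hz : z ≠ 0)
  rw [Gamma_add_one z hz]
  field_simp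

/-- Let `h : ℝ → ℂ` be measurable, exponentially decaying for `t ≥ 1`, with
`h(t) = a + b log t + O(t^ε)` on `(0,1]`.  Then the zeta function
`ζ(z) = (1/Γ(z)) ∫_0^∞ t^(z-1) h(t) dt` satisfies `z ζ(z) → -b` as `z → 0` in the half-plane
`Re z > 0` (a simple pole at `0` with residue `-b`). -/
theorem zeta_simple_pole_from_log (h : ℝ → ℂ) (hm : Measurable h)
    (C c : ℝ) (hC : 0 < C) (hc : 0 < c)
    (hlarge : ∀ t : ℝ, 1 ≤ t → ‖h t‖ ≤ C * Real.exp (-c * t))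
    (a b : ℂ) (ε C' : ℝ) (hε : 0 < ε) (hC' : 0 < C')
    (hsmall : ∀ t ∈ Set.Ioc (0 : ℝ) 1,
      ‖h t - (a + b * (Real.log t : ℂ))‖ ≤ C' * t ^ ε) :
    Filter.Tendsto
      (fun z : ℂ => z *
        (1 / Complex.Gamma z * ∫ t in Set.Ioi (0 : ℝ), (t : ℂ) ^ (z - 1) * h t))
      (nhdsWithin 0 {z : ℂ | 0 < z.re}) (nhds (-b)) := by
  set g : ℝ → ℂ := fun t => h t - (Ioc 0 1).indicator (fun t => a + b * Real.log t) t
  have hg_small (t : ℝ) (ht : t ∈ Ioc 0 1) : ‖g t‖ ≤ C' * t ^ ε := by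
    simpa [g, indicator_of_mem ht] using hsmall t ht
  have hg_large (t : ℝ) (ht : 1 < t) : ‖g t‖ ≤ C * Real.exp (-c * t) := by
    simpa [g, indicator_of_notMem fun hmem : t ∈ Ioc 0 1 => hmem.2.not_gt ht]
      using hlarge t ht.le
  have hg_loc : LocallyIntegrableOn g (Ioi 0) :=
    locallyIntegrableOn_Ioi_of_norm_le_rpow_of_norm_le_exp
      (hm.sub (Measurable.indicator (by fun_prop) measurableSet_Ioc)).aestronglyMeasurable
      hC.le hc.le hC'.le hε.le hg_small hg_large
  have hg_top : g =O[atTop] fun t => Real.exp (-c * t) := by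
    refine IsBigO.of_bound C ?_
    filter_upwards [eventually_gt_atTop 1] with t ht
    simpa [Real.abs_exp] using hg_large t ht
  have hg_bot : g =O[𝓝[>] 0] (· ^ (-(-ε))) := by
    refine IsBigO.of_bound C' ?_
    filter_upwards [Ioc_mem_nhdsGT zero_lt_one] with t ht
    simpa [neg_neg, abs_of_nonneg (Real.rpow_nonneg ht.1.le ε)] using hg_small t ht
  have hg_cont : ContinuousAt (mellin g) 0 :=
    (mellin_differentiableAt_of_isBigO_rpow_exp hc hg_loc hg_top hg_bot
      (by simpa using hε)).continuousAt
  refine ((tendsto_mul_one_div_Gamma_mul_of_double_pole hg_cont a b).mono_left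
    (nhdsWithin_mono 0 fun z (hz : 0 < z.re) (hz0 : z = 0) => by simp [hz0] at hz)).congr' ?_
  filter_upwards [self_mem_nhdsWithin] with z (hz : 0 < z.re)
  have hmodel := hasMellin_indicator_Ioc_const_add_log a b hz
  have hsum := hasMellin_add hmodel.1
    (mellinConvergent_of_isBigO_rpow_exp hc hg_loc hg_top hg_bot (by linarith))
  rw [← hmodel.2, ← hsum.2]
  simp only [mellin, g, add_sub_cancel, smul_eq_mul]
end
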